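/- Assume T(0,y) = 0 for all y ∈ W. Fix ε > 0 and a finite Borel measure m on X, and suppose there exist K < ∞ and β ∈ (0,1) such that [P₁^n m](B) ≤ K β^n for every n ≥ 0 and every Borel B ⊆ X \ U(ε). Write β = β₁ β₂ with β₁, β₂ ∈ (0,1) and set α = 1/β₂ > 1. Then for every Borel B ⊆ X \ U(ε) the series μ̄(B) := Σ_{k=0}^∞ α^k [P₁^k m](B) converges (indeed μ̄(B) ≤ K/(1−β₁)), μ̄ defines a finite positive measure on X \ U(ε) satisfying [P₁ μ̄](B) ≤ β₂ μ̄(B) for all Borel B ⊆ X \ U(ε) (so μ̄ is a Lyapunov measure with γ = β₂ < 1), and μ̄ dominates m: m(B) ≤ μ̄(B) for all Borel B ⊆ X \ U(ε); in particular m is absolutely continuous with respect to μ̄ on X \ U(ε). -/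

import Mathlib

/-!
Because `P₁` is built from restriction and `bind`, it commutes with countable sums and scalar
multiples, so `μ̄ = Σₖ αᵏ P₁ᵏ m` satisfies `μ̄ = m + α P₁ μ̄`. Hence `m ≤ μ̄` and
`P₁ μ̄ = β₂ (μ̄ - m) ≤ β₂ μ̄`. On sets away from `0` the `k`-th term is at most
`αᵏ K βᵏ = K β₁ᵏ`, which sums to `K / (1 - β₁)`.
-/

open MeasureTheory Filter Metric Set

noncomputable section

/-- The restriction `P₁` of the Perron–Frobenius operator to a set `S` (= `X \ {0}`):
`[P₁ μ](B) = ∫_S ∫_W χ_B(T(x,y)) dv(y) dμ(x)`, with the output measure restricted to `S`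
(so that the operator can be iterated, `P₁^0 m = m`). -/
def P1 {α Wsp : Type*} [MeasurableSpace α] [MeasurableSpace Wsp]
    (T : α → Wsp → α) (v : Measure Wsp) (S : Set α) (μ : Measure α) : Measure α :=
  ((μ.restrict S).bind fun x => v.map (T x)).restrict S

open scoped ENNReal

theorem ENNReal.tsum_inv_pow_mul_le_div_of_le_mul_pow {a : ℕ → ℝ≥0∞} {K β₁ β₂ : ℝ≥0∞}
    (hβ₂0 : β₂ ≠ 0) (hβ₂top : β₂ ≠ ∞) (ha : ∀ k, a k ≤ K * (β₁ * β₂) ^ k) :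
    ∑' k, β₂⁻¹ ^ k * a k ≤ K / (1 - β₁) := by
  have hterm : ∀ k, β₂⁻¹ ^ k * a k ≤ K * β₁ ^ k := fun k =>
    calc β₂⁻¹ ^ k * a k ≤ β₂⁻¹ ^ k * (K * (β₁ * β₂) ^ k) := by gcongr; exact ha k
      _ = K * β₁ ^ k * (β₂⁻¹ * β₂) ^ k := by ring
      _ = K * β₁ ^ k := by rw [ENNReal.inv_mul_cancel hβ₂0 hβ₂top, one_pow, mul_one]
  calc ∑' k, β₂⁻¹ ^ k * a k ≤ ∑' k, K * β₁ ^ k := ENNReal.tsum_le_tsum hterm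
    _ = K / (1 - β₁) := by rw [ENNReal.tsum_mul_left, ENNReal.tsum_geometric, div_eq_mul_inv]

section OrbitSeries

variable {α : Type*} [MeasurableSpace α]

/-- `Σₖ cᵏ Pᵏ m`; with `P = P₁` and `c = α = 1/β₂` this is the measure `μ̄` of the paper. -/
def orbitSeries (P : Measure α → Measure α) (c : ℝ≥0∞) (m : Measure α) : Measure α :=
  Measure.sum fun k : ℕ => c ^ k • P^[k] m

variable (P : Measure α → Measure α) (c : ℝ≥0∞) (m : Measure α)

theorem orbitSeries_apply {s : Set α} (hs : MeasurableSet s) :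
    orbitSeries P c m s = ∑' k : ℕ, c ^ k * (P^[k] m) s := by
  simp only [orbitSeries, Measure.sum_apply _ hs, Measure.smul_apply, smul_eq_mul]

theorem le_orbitSeries : m ≤ orbitSeries P c m := by
  calc m = c ^ 0 • P^[0] m := by rw [pow_zero, one_smul, Function.iterate_zero_apply]
    _ ≤ orbitSeries P c m := Measure.le_sum _ 0

variable {P}
  (hsum : ∀ μ : ℕ → Measure α, P (Measure.sum μ) = Measure.sum fun k => P (μ k))
  (hsmul : ∀ (a : ℝ≥0∞) (μ : Measure α), P (a • μ) = a • P μ)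
include hsum hsmul

theorem apply_orbitSeries :
    P (orbitSeries P c m) = Measure.sum fun k : ℕ => c ^ k • P^[k + 1] m := by
  simp only [orbitSeries, hsum, hsmul, Function.iterate_succ_apply']

theorem orbitSeries_eq_add_smul_apply : orbitSeries P c m = m + c • P (orbitSeries P c m) := by
  ext s hs
  rw [apply_orbitSeries c m hsum hsmul, Measure.add_apply, Measure.smul_apply, smul_eq_mul,
    Measure.sum_apply _ hs, orbitSeries_apply P c m hs, tsum_eq_zero_add' ENNReal.summable,
    ← ENNReal.tsum_mul_left]
  simp only [Measure.smul_apply, smul_eq_mul, pow_zero, one_mul, Function.iterate_zero_apply,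
    pow_succ', mul_assoc]

theorem apply_orbitSeries_inv_le {γ : ℝ≥0∞} (hγ0 : γ ≠ 0) (hγtop : γ ≠ ∞) :
    P (orbitSeries P γ⁻¹ m) ≤ γ • orbitSeries P γ⁻¹ m := by
  conv_rhs => rw [orbitSeries_eq_add_smul_apply γ⁻¹ m hsum hsmul]
  rw [smul_add, smul_smul, ENNReal.mul_inv_cancel hγ0 hγtop, one_smul]
  exact Measure.le_add_left le_rfl

end OrbitSeries

section PerronFrobenius

variable {α Wsp : Type*} [MeasurableSpace α] [MeasurableSpace Wsp]
  {T : α → Wsp → α} {v : Measure Wsp} {S : Set α}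

theorem measurable_map_of_measurable_uncurry [SFinite v] (hT : Measurable (Function.uncurry T)) :
    Measurable fun x => v.map (T x) := by
  have hmap : (fun x => v.map (T x)) = fun x => (v.map (Prod.mk x)).map (Function.uncurry T) :=
    funext fun x => (Measure.map_map hT measurable_prodMk_left).symm
  rw [hmap]
  exact (Measure.measurable_map _ hT).comp Measurable.map_prodMk_left

theorem P1_smul (a : ℝ≥0∞) (μ : Measure α) : P1 T v S (a • μ) = a • P1 T v S μ := by
  simp only [P1, Measure.restrict_smul, Measure.bind_smul]

theorem P1_sum [SFinite v] (hT : Measurable (Function.uncurry T)) {ι : Type*} [Countable ι]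
    (μ : ι → Measure α) : P1 T v S (Measure.sum μ) = Measure.sum fun i => P1 T v S (μ i) := by
  simp only [P1, Measure.restrict_sum_of_countable,
    Measure.bind_sum _ _ (measurable_map_of_measurable_uncurry hT).aemeasurable]

end PerronFrobenius

theorem lyapunov_measure_series_construction_general
    {d : ℕ} {Wsp : Type*} [MeasurableSpace Wsp]
    (X : Set (EuclideanSpace ℝ (Fin d)))
    (v : Measure Wsp) [IsProbabilityMeasure v]
    (T : EuclideanSpace ℝ (Fin d) → Wsp → EuclideanSpace ℝ (Fin d))
    (hT : Measurable (Function.uncurry T))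
    (ε : ℝ)
    (m : Measure (EuclideanSpace ℝ (Fin d)))
    (K : ENNReal)
    (β β₁ β₂ : ENNReal) (hβ : β = β₁ * β₂)
    (hβ₂0 : 0 < β₂) (hβ₂1 : β₂ < 1)
    (hmain : ∀ n : ℕ,
      ∀ B : Set (EuclideanSpace ℝ (Fin d)), MeasurableSet B → B ⊆ X \ ball 0 ε →
        ((P1 T v (X \ {0}))^[n] m) B ≤ K * β ^ n) :
    -- the Lyapunov measure `μ̄ = Σ_k α^k P₁^k m`, with `α = 1/β₂`
    ∀ μbar : Measure (EuclideanSpace ℝ (Fin d)),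
      μbar = Measure.sum (fun k : ℕ => (β₂⁻¹ : ENNReal) ^ k • ((P1 T v (X \ {0}))^[k] m)) →
      (∀ B : Set (EuclideanSpace ℝ (Fin d)), MeasurableSet B → B ⊆ X \ ball 0 ε →
          μbar B = ∑' k : ℕ, (β₂⁻¹ : ENNReal) ^ k * ((P1 T v (X \ {0}))^[k] m) B ∧
          μbar B ≤ K / (1 - β₁) ∧
          P1 T v (X \ {0}) μbar B ≤ β₂ * μbar B ∧
          m B ≤ μbar B) := by
  rintro _ rfl B hB hBε
  have hseries := orbitSeries_apply (P1 T v (X \ {0})) β₂⁻¹ m hB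
  refine ⟨hseries, ?_, ?_, le_orbitSeries _ _ m B⟩
  · exact hseries.trans_le <| ENNReal.tsum_inv_pow_mul_le_div_of_le_mul_pow hβ₂0.ne'
      hβ₂1.ne_top fun k => hβ ▸ hmain k B hB hBε
  · exact apply_orbitSeries_inv_le m (P1_sum hT) P1_smul hβ₂0.ne' hβ₂1.ne_top B

/-- if `[P₁ⁿ m](B) ≤ K βⁿ` for all `n ≥ 0` and Borel `B ⊆ X \ U(ε)`, write
`β = β₁ β₂` with `β₁, β₂ ∈ (0,1)` and set `α = 1/β₂ > 1`. Then
`μ̄ := Σ_{k=0}^∞ α^k P₁^k m` converges on Borel sets `B ⊆ X \ U(ε)` (with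
`μ̄(B) ≤ K/(1−β₁)`), satisfies `[P₁ μ̄](B) ≤ β₂ μ̄(B)` (a Lyapunov measure with `γ = β₂`),
and dominates `m`: `m(B) ≤ μ̄(B)` (in particular `m ≺ μ̄` on `X \ U(ε)`). -/
theorem lyapunov_measure_series_construction
    {d : ℕ} {Wsp : Type*} [MeasurableSpace Wsp]
    (X : Set (EuclideanSpace ℝ (Fin d))) (hX : IsCompact X)
    (v : Measure Wsp) [IsProbabilityMeasure v]
    (T : EuclideanSpace ℝ (Fin d) → Wsp → EuclideanSpace ℝ (Fin d))
    (hT : Measurable (Function.uncurry T))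
    (hTX : ∀ x ∈ X, ∀ y, T x y ∈ X)
    (heq : ∀ y : Wsp, T 0 y = 0)
    (ε : ℝ) (hε : 0 < ε)
    (m : Measure (EuclideanSpace ℝ (Fin d))) [IsFiniteMeasure m] (hmX : m Xᶜ = 0)
    (K : ENNReal) (hK : K < ⊤)
    (β β₁ β₂ : ENNReal) (hβ : β = β₁ * β₂)
    (hβ₁0 : 0 < β₁) (hβ₁1 : β₁ < 1) (hβ₂0 : 0 < β₂) (hβ₂1 : β₂ < 1)
    (hmain : ∀ n : ℕ,
      ∀ B : Set (EuclideanSpace ℝ (Fin d)), MeasurableSet B → B ⊆ X \ ball 0 ε →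
        ((P1 T v (X \ {0}))^[n] m) B ≤ K * β ^ n) :
    -- the Lyapunov measure `μ̄ = Σ_k α^k P₁^k m`, with `α = 1/β₂`
    ∀ μbar : Measure (EuclideanSpace ℝ (Fin d)),
      μbar = Measure.sum (fun k : ℕ => (β₂⁻¹ : ENNReal) ^ k • ((P1 T v (X \ {0}))^[k] m)) →
      (∀ B : Set (EuclideanSpace ℝ (Fin d)), MeasurableSet B → B ⊆ X \ ball 0 ε →
          μbar B = ∑' k : ℕ, (β₂⁻¹ : ENNReal) ^ k * ((P1 T v (X \ {0}))^[k] m) B ∧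
          μbar B ≤ K / (1 - β₁) ∧
          P1 T v (X \ {0}) μbar B ≤ β₂ * μbar B ∧
          m B ≤ μbar B) :=
  lyapunov_measure_series_construction_general X v T hT ε m K β β₁ β₂ hβ hβ₂0 hβ₂1 hmain
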